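/- arXiv:1609.04113 — 8 statements merged into one kernel-verified Lean document; each statement's English description precedes it below -/
import Mathlib

section
/- Every direct summand of a Rickart module is a Rickart module. -/
/-- `M` is a Rickart module: the kernel of every endomorphism is a direct summand. -/
def IsRickartModule (R M : Type*) [Ring R] [AddCommGroup M] [Module R M] : Prop :=
  ∀ φ : Module.End R M, ∃ C : Submodule R M, IsCompl (LinearMap.ker φ) C

/-!
An endomorphism `φ` of `N` extends to `ψ = ι ∘ φ ∘ π` on `M`, where `π : M → N` is onto and
`ι : N → M` is injective; then `ker ψ = π⁻¹(ker φ)`. A complement `C` of `ker ψ` in `M` is pushed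
forward by `π` to a complement of `ker φ` in `N`. For a direct summand `N` of `M`, take for `π` the
projection along the complement and for `ι` the inclusion.
-/

namespace Submodule

variable {R M N : Type*} [Ring R] [AddCommGroup M] [Module R M] [AddCommGroup N] [Module R N]

theorem isCompl_map_of_isCompl_comap {f : M →ₗ[R] N} (hf : Function.Surjective f)
    {K : Submodule R N} {C : Submodule R M} (hC : IsCompl (K.comap f) C) :
    IsCompl K (C.map f) := by
  constructor
  · rw [disjoint_iff, eq_bot_iff]
    rintro _ ⟨hxK, c, hcC, rfl⟩
    have hc : c ∈ K.comap f ⊓ C := ⟨hxK, hcC⟩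
    rw [hC.inf_eq_bot, mem_bot] at hc
    simp [hc]
  · rw [codisjoint_iff, ← map_comap_eq_of_surjective hf K, ← map_sup, hC.sup_eq_top,
      map_top, LinearMap.range_eq_top.mpr hf]

end Submodule

theorem IsRickartModule.of_surjective_of_injective {R M N : Type*} [Ring R]
    [AddCommGroup M] [Module R M] [AddCommGroup N] [Module R N] (hM : IsRickartModule R M)
    {π : M →ₗ[R] N} (hπ : Function.Surjective π) {ι : N →ₗ[R] M} (hι : Function.Injective ι) :
    IsRickartModule R N := by
  intro φ
  obtain ⟨C, hC⟩ := hM (ι ∘ₗ φ ∘ₗ π)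
  have hker : LinearMap.ker (ι ∘ₗ φ ∘ₗ π) = (LinearMap.ker φ).comap π := by
    rw [LinearMap.ker_comp_of_ker_eq_bot _ (LinearMap.ker_eq_bot.mpr hι), LinearMap.ker_comp]
  rw [hker] at hC
  exact ⟨_, Submodule.isCompl_map_of_isCompl_comap hπ hC⟩

theorem directSummand_of_rickart_is_rickart
    {R M : Type*} [Ring R] [AddCommGroup M] [Module R M]
    (hM : IsRickartModule R M)
    (N N' : Submodule R M) (h : IsCompl N N') :
    IsRickartModule R N :=
  hM.of_surjective_of_injective (Submodule.projectionOnto_surjective h) N.injective_subtype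
end

section
/- Let M₁ and M₂ be Rickart R-modules such that (1) every submodule N of M₁ ⊕ M₂ decomposes as N = N₁ ⊕ N₂ with Nᵢ ≤ Mᵢ, and (2) for all i, j ∈ {1,2}, Mᵢ is relatively Rickart to Mⱼ (every homomorphism Mᵢ → Mⱼ has kernel a direct summand of Mᵢ). Then M₁ ⊕ M₂ is a Rickart module. -/
/-- `M` is relatively Rickart to `N`: every homomorphism `M → N` has kernel a
direct summand of `M`. -/
def IsRelativelyRickart (R M N : Type*) [Ring R] [AddCommGroup M] [Module R M]
    [AddCommGroup N] [Module R N] : Prop :=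
  ∀ φ : M →ₗ[R] N, ∃ C : Submodule R M, IsCompl (LinearMap.ker φ) C

/-!
The kernel of `φ : M₁ × M₂ → M₁ × M₂` is a submodule of `M₁ × M₂`, so by the decomposition
hypothesis it is `ker (φ ∘ inl) × ker (φ ∘ inr)`, and it suffices that each `Mᵢ` is
relatively Rickart to `M₁ × M₂`. This holds because relative Rickartness to `N₁` and to
`N₂` gives relative Rickartness to `N₁ × N₂`: if `ker f₁ ⊕ C = M`, then with `π` the
projection onto `ker f₁` along `C`, `ker (f₂ ∘ π) = (ker f₁ ⊓ ker f₂) ⊕ C`, and a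
complement `D` of `ker (f₂ ∘ π)` yields the complement `C ⊕ D` of `ker f₁ ⊓ ker f₂`.
-/

open LinearMap

section

variable {R M N₁ N₂ : Type*} [Ring R] [AddCommGroup M] [Module R M]
  [AddCommGroup N₁] [Module R N₁] [AddCommGroup N₂] [Module R N₂]

namespace Submodule

theorem ker_comp_projection {A C : Submodule R M} (hAC : IsCompl A C) (g : M →ₗ[R] N₁) :
    ker (g ∘ₗ A.projection C hAC) = A ⊓ ker g ⊔ C := by
  apply le_antisymm
  · intro x hx
    rw [← sub_add_cancel x (A.projection C hAC x), add_comm]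
    exact add_mem_sup ⟨projection_apply_mem hAC x, hx⟩ (sub_projection_mem hAC x)
  · refine sup_le (fun x ⟨hxA, hxg⟩ ↦ ?_) (fun x hxC ↦ ?_)
    · simpa [projection_apply_of_mem_left hAC hxA] using hxg
    · simp [projection_apply_of_mem_right hAC hxC]

theorem isCompl_prod {A₁ B₁ : Submodule R M} {A₂ B₂ : Submodule R N₁}
    (h₁ : IsCompl A₁ B₁) (h₂ : IsCompl A₂ B₂) : IsCompl (A₁.prod A₂) (B₁.prod B₂) where
  disjoint := disjoint_iff.2 <| by rw [prod_inf_prod, h₁.inf_eq_bot, h₂.inf_eq_bot, prod_bot]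
  codisjoint := codisjoint_iff.2 <| by
    rw [prod_sup_prod, h₁.sup_eq_top, h₂.sup_eq_top, prod_top]

end Submodule

theorem LinearMap.ker_eq_ker_fst_comp_inf_ker_snd_comp (f : M →ₗ[R] N₁ × N₂) :
    ker f = ker (fst R N₁ N₂ ∘ₗ f) ⊓ ker (snd R N₁ N₂ ∘ₗ f) := by
  rw [← ker_prod, ← prod_comp, pair_fst_snd, id_comp]

namespace IsRelativelyRickart

theorem exists_isCompl_inf_ker (h : IsRelativelyRickart R M N₁) {A C : Submodule R M}
    (hAC : IsCompl A C) (g : M →ₗ[R] N₁) : ∃ D : Submodule R M, IsCompl (A ⊓ ker g) D := by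
  obtain ⟨D, hD⟩ := h (g ∘ₗ A.projection C hAC)
  rw [Submodule.ker_comp_projection] at hD
  exact ⟨C ⊔ D, Disjoint.isCompl_sup_right_of_isCompl_sup_left
    (hAC.disjoint.mono_left inf_le_left) hD⟩

theorem prod (h₁ : IsRelativelyRickart R M N₁) (h₂ : IsRelativelyRickart R M N₂) :
    IsRelativelyRickart R M (N₁ × N₂) := by
  intro f
  obtain ⟨C, hC⟩ := h₁ (fst R N₁ N₂ ∘ₗ f)
  rw [ker_eq_ker_fst_comp_inf_ker_snd_comp]
  exact h₂.exists_isCompl_inf_ker hC _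

end IsRelativelyRickart

theorem LinearMap.ker_eq_prod_ker_comp_inl_inr {M₁ M₂ : Type*} [AddCommGroup M₁] [Module R M₁]
    [AddCommGroup M₂] [Module R M₂] {φ : M₁ × M₂ →ₗ[R] M} {N₁ : Submodule R M₁}
    {N₂ : Submodule R M₂} (h : ker φ = N₁.prod N₂) :
    ker φ = (ker (φ ∘ₗ inl R M₁ M₂)).prod (ker (φ ∘ₗ inr R M₁ M₂)) := by
  rw [ker_comp, ker_comp, h, Submodule.prod_comap_inl, Submodule.prod_comap_inr]

end

theorem rickart_of_prod
    {R M₁ M₂ : Type*} [Ring R] [AddCommGroup M₁] [Module R M₁]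
    [AddCommGroup M₂] [Module R M₂]
    (h1 : IsRickartModule R M₁) (h2 : IsRickartModule R M₂)
    (hdecomp : ∀ N : Submodule R (M₁ × M₂),
      ∃ (N₁ : Submodule R M₁) (N₂ : Submodule R M₂), N = N₁.prod N₂)
    (h12 : IsRelativelyRickart R M₁ M₂) (h21 : IsRelativelyRickart R M₂ M₁) :
    IsRickartModule R (M₁ × M₂) := by
  intro φ
  obtain ⟨N₁, N₂, hN⟩ := hdecomp (ker φ)
  obtain ⟨C₁, hC₁⟩ := IsRelativelyRickart.prod h1 h12 (φ ∘ₗ inl R M₁ M₂)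
  obtain ⟨C₂, hC₂⟩ := IsRelativelyRickart.prod h21 h2 (φ ∘ₗ inr R M₁ M₂)
  rw [ker_eq_prod_ker_comp_inl_inr hN]
  exact ⟨C₁.prod C₂, Submodule.isCompl_prod hC₁ hC₂⟩
end

section
/- Let M₁ and M₂ be Rickart R-modules such that (1) Ann_R(M₁) + Ann_R(M₂) = R, and (2) Mᵢ and Mⱼ are relatively Rickart for all i, j ∈ {1,2}. Then M₁ ⊕ M₂ is a Rickart module. -/
section

variable {R M N M₁ M₂ N₁ N₂ : Type*} [Semiring R]
  [AddCommMonoid M] [Module R M] [AddCommMonoid N] [Module R N]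
  [AddCommMonoid M₁] [Module R M₁] [AddCommMonoid M₂] [Module R M₂]
  [AddCommMonoid N₁] [Module R N₁] [AddCommMonoid N₂] [Module R N₂]

theorem LinearMap.eq_zero_of_annihilator_sup_eq_top
    (hann : Module.annihilator R M ⊔ Module.annihilator R N = ⊤) (f : M →ₗ[R] N) : f = 0 := by
  obtain ⟨a, ha, b, hb, hab⟩ := Submodule.mem_sup.mp (hann ▸ Submodule.mem_top : (1 : R) ∈ _)
  ext x
  calc f x = f ((a + b) • x) := by rw [hab, one_smul]
    _ = 0 := by
      rw [add_smul, Module.mem_annihilator.mp ha x, zero_add, map_smul,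
        Module.mem_annihilator.mp hb (f x)]

theorem LinearMap.eq_prodMap_of_annihilator_sup_eq_top
    (h₁ : Module.annihilator R M₁ ⊔ Module.annihilator R N₂ = ⊤)
    (h₂ : Module.annihilator R M₂ ⊔ Module.annihilator R N₁ = ⊤)
    (φ : M₁ × M₂ →ₗ[R] N₁ × N₂) :
    φ = (fst R N₁ N₂ ∘ₗ φ ∘ₗ inl R M₁ M₂).prodMap (snd R N₁ N₂ ∘ₗ φ ∘ₗ inr R M₁ M₂) := by
  have h₁₂ : ∀ x, (φ (x, 0)).2 = 0 :=
    LinearMap.ext_iff.mp (eq_zero_of_annihilator_sup_eq_top h₁ (snd R N₁ N₂ ∘ₗ φ ∘ₗ inl R M₁ M₂))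
  have h₂₁ : ∀ y, (φ (0, y)).1 = 0 :=
    LinearMap.ext_iff.mp (eq_zero_of_annihilator_sup_eq_top h₂ (fst R N₁ N₂ ∘ₗ φ ∘ₗ inr R M₁ M₂))
  refine prod_ext (LinearMap.ext fun x => Prod.ext ?_ ?_) (LinearMap.ext fun y => Prod.ext ?_ ?_)
  · simp
  · simp [h₁₂]
  · simp [h₂₁]
  · simp

theorem Submodule.isCompl_prod_s4 {p₁ q₁ : Submodule R M} {p₂ q₂ : Submodule R N}
    (h₁ : IsCompl p₁ q₁) (h₂ : IsCompl p₂ q₂) : IsCompl (p₁.prod p₂) (q₁.prod q₂) where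
  disjoint := by
    rw [disjoint_iff, prod_inf_prod, h₁.inf_eq_bot, h₂.inf_eq_bot, prod_bot]
  codisjoint := by
    rw [codisjoint_iff, prod_sup_prod, h₁.sup_eq_top, h₂.sup_eq_top, prod_top]

end

theorem rickart_of_prod_of_comaximal_annihilators_general
    {R M₁ M₂ : Type*} [Ring R] [AddCommGroup M₁] [Module R M₁]
    [AddCommGroup M₂] [Module R M₂]
    (h1 : IsRickartModule R M₁) (h2 : IsRickartModule R M₂)
    (hann : Module.annihilator R M₁ ⊔ Module.annihilator R M₂ = ⊤) :
    IsRickartModule R (M₁ × M₂) := by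
  intro φ
  rw [φ.eq_prodMap_of_annihilator_sup_eq_top hann (by rwa [sup_comm]), LinearMap.ker_prodMap]
  obtain ⟨C₁, hC₁⟩ := h1 (LinearMap.fst R M₁ M₂ ∘ₗ φ ∘ₗ LinearMap.inl R M₁ M₂)
  obtain ⟨C₂, hC₂⟩ := h2 (LinearMap.snd R M₁ M₂ ∘ₗ φ ∘ₗ LinearMap.inr R M₁ M₂)
  exact ⟨C₁.prod C₂, Submodule.isCompl_prod_s4 hC₁ hC₂⟩

theorem rickart_of_prod_of_comaximal_annihilators
    {R M₁ M₂ : Type*} [Ring R] [AddCommGroup M₁] [Module R M₁]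
    [AddCommGroup M₂] [Module R M₂]
    (h1 : IsRickartModule R M₁) (h2 : IsRickartModule R M₂)
    (hann : Module.annihilator R M₁ ⊔ Module.annihilator R M₂ = ⊤)
    (h12 : IsRelativelyRickart R M₁ M₂) (h21 : IsRelativelyRickart R M₂ M₁) :
    IsRickartModule R (M₁ × M₂) :=
  rickart_of_prod_of_comaximal_annihilators_general h1 h2 hann
end

section
/- If M is a Rickart R-module then its endomorphism ring S = End_R(M) is a right Rickart ring, i.e., for every φ ∈ S the right annihilator r_S(φ) = {ψ ∈ S : φψ = 0} equals eS for some idempotent e ∈ S. -/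
theorem IsIdempotentElem.exists_eq_mul_iff {S : Type*} [Semigroup S] {e : S}
    (he : IsIdempotentElem e) (x : S) : (∃ s, x = e * s) ↔ e * x = x := by
  constructor
  · rintro ⟨s, rfl⟩
    rw [← mul_assoc, he.eq]
  · exact fun hx => ⟨x, hx.symm⟩

namespace Module.End

variable {R M : Type*} [Semiring R] [AddCommMonoid M] [Module R M]

theorem mul_eq_zero_iff_exists_eq_mul_of_range_eq_ker {φ e : Module.End R M}
    (he : IsIdempotentElem e) (hrange : LinearMap.range e = LinearMap.ker φ)
    (ψ : Module.End R M) : φ * ψ = 0 ↔ ∃ s, ψ = e * s := by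
  rw [he.exists_eq_mul_iff, mul_eq_comp, mul_eq_comp,
    LinearMap.IsIdempotentElem.comp_eq_right_iff he, hrange, LinearMap.range_le_ker_iff]

end Module.End

theorem endRing_rightRickart_of_rickart
    {R M : Type*} [Ring R] [AddCommGroup M] [Module R M]
    (hM : IsRickartModule R M) :
    ∀ φ : Module.End R M, ∃ e : Module.End R M, IsIdempotentElem e ∧
      ∀ ψ : Module.End R M, φ * ψ = 0 ↔ ∃ s : Module.End R M, ψ = e * s := by
  intro φ
  obtain ⟨C, hC⟩ := hM φ
  have he := Submodule.isIdempotentElem_projection hC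
  exact ⟨_, he, Module.End.mul_eq_zero_iff_exists_eq_mul_of_range_eq_ker he
    (Submodule.range_projection hC)⟩
end

section
/- Let M be an R-module whose endomorphism ring S = End_R(M) is von Neumann regular. Then M is a Rickart module. -/
theorem isIdempotentElem_mul_of_mul_mul_eq {S : Type*} [Semigroup S] {a b : S}
    (h : a * b * a = a) : IsIdempotentElem (b * a) := by
  rw [IsIdempotentElem, mul_assoc, ← mul_assoc a, h]

namespace Module.End

open LinearMap

theorem ker_mul_eq_of_mul_mul_eq {R M : Type*} [Semiring R] [AddCommMonoid M] [Module R M]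
    {φ ψ : Module.End R M} (h : φ * ψ * φ = φ) : ker (ψ * φ) = ker φ := by
  refine le_antisymm (fun x hx => ?_) (ker_le_ker_comp φ ψ)
  rw [mem_ker] at hx ⊢
  rw [← h, mul_assoc, mul_apply, hx, map_zero]

theorem isCompl_ker_range_of_mul_mul_eq {R M : Type*} [Ring R] [AddCommGroup M] [Module R M]
    {φ ψ : Module.End R M} (h : φ * ψ * φ = φ) : IsCompl (ker φ) (range (ψ * φ)) :=
  ker_mul_eq_of_mul_mul_eq h ▸ (isIdempotentElem_mul_of_mul_mul_eq h).isCompl.symm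

end Module.End

theorem rickart_of_regular_endRing
    {R M : Type*} [Ring R] [AddCommGroup M] [Module R M]
    (hreg : ∀ φ : Module.End R M, ∃ ψ : Module.End R M, φ * ψ * φ = φ) :
    IsRickartModule R M := by
  intro φ
  obtain ⟨ψ, hψ⟩ := hreg φ
  exact ⟨_, Module.End.isCompl_ker_range_of_mul_mul_eq hψ⟩
end

section
/- Let M be a Rickart R-module that is a self-cogenerator (for every endomorphism φ, the image of φ is a direct summand of M via the self-cogenerator property). Then S = End_R(M) is a von Neumann regular ring. -/
namespace LinearMap

variable {R M N : Type*} [Ring R] [AddCommGroup M] [Module R M] [AddCommGroup N] [Module R N]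

theorem exists_rightInverse_of_isCompl_ker (f : M →ₗ[R] N) {C : Submodule R M}
    (hC : IsCompl (ker f) C) : ∃ σ : range f →ₗ[R] M, ∀ y : range f, f (σ y) = y := by
  let e : range f ≃ₗ[R] C := f.quotKerEquivRange.symm.trans ((ker f).quotientEquivOfIsCompl C hC)
  refine ⟨C.subtype ∘ₗ e.toLinearMap, fun y => ?_⟩
  have hmk : (ker f).mkQ (e y : M) = f.quotKerEquivRange.symm y :=
    (ker f).mk_quotientEquivOfIsCompl_apply hC _
  simpa using congrArg Subtype.val (congrArg f.quotKerEquivRange hmk)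

theorem exists_comp_comp_eq_self_of_isCompl (f : M →ₗ[R] N) {C : Submodule R M}
    {D : Submodule R N} (hC : IsCompl (ker f) C) (hD : IsCompl (range f) D) :
    ∃ ψ : N →ₗ[R] M, f ∘ₗ ψ ∘ₗ f = f := by
  obtain ⟨σ, hσ⟩ := f.exists_rightInverse_of_isCompl_ker hC
  refine ⟨σ ∘ₗ (range f).projectionOnto D hD, LinearMap.ext fun x => ?_⟩
  have hproj : (range f).projectionOnto D hD (f x) = f.rangeRestrict x :=
    Submodule.projectionOnto_apply_left hD (f.rangeRestrict x)
  simp only [comp_apply, hproj, hσ, codRestrict_apply]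

end LinearMap

theorem regular_endRing_of_rickart_selfCogenerator
    {R M : Type*} [Ring R] [AddCommGroup M] [Module R M]
    (hM : IsRickartModule R M)
    (hcog : ∀ φ : Module.End R M, ∃ C : Submodule R M, IsCompl (LinearMap.range φ) C) :
    ∀ φ : Module.End R M, ∃ ψ : Module.End R M, φ * ψ * φ = φ := by
  intro φ
  obtain ⟨C, hC⟩ := hM φ
  obtain ⟨D, hD⟩ := hcog φ
  exact φ.exists_comp_comp_eq_self_of_isCompl hC hD
end

section
/- Let M be a quasi-injective R-module with endomorphism ring S. If M is a Rickart module, then S is von Neumann regular. -/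
/-- `M` is quasi-injective: every homomorphism from a submodule of `M` to `M`
extends to an endomorphism of `M`. -/
def IsQuasiInjective (R M : Type*) [Ring R] [AddCommGroup M] [Module R M] : Prop :=
  ∀ (N : Submodule R M) (f : N →ₗ[R] M), ∃ g : Module.End R M, ∀ n : N, g n = f n

/-!
If `Ker φ ⊕ C = M`, then `φ` maps `C` isomorphically onto `φ C`; quasi-injectivity extends the
inverse `φ C → C ⊆ M` to an endomorphism `ψ`, and `φ ψ φ = φ` can be checked separately on
`Ker φ` and on `C`.
-/

section

variable {R M N : Type*} [Ring R] [AddCommGroup M] [Module R M] [AddCommGroup N] [Module R N]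

theorem IsQuasiInjective.exists_comp_eq (hqi : IsQuasiInjective R M) {f : N →ₗ[R] M}
    (hf : Function.Injective f) (g : N →ₗ[R] M) : ∃ h : Module.End R M, h ∘ₗ f = g := by
  let e := LinearEquiv.ofInjective f hf
  obtain ⟨h, hh⟩ := hqi (LinearMap.range f) (g ∘ₗ e.symm.toLinearMap)
  refine ⟨h, LinearMap.ext fun n => ?_⟩
  simpa [e] using hh (e n)

theorem Module.End.mul_mul_eq_self_of_isCompl_ker {φ ψ : Module.End R M} {C : Submodule R M}
    (hC : IsCompl (LinearMap.ker φ) C) (hψ : ∀ c ∈ C, ψ (φ c) = c) : φ * ψ * φ = φ := by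
  ext m
  obtain ⟨k, hk, c, hc, rfl⟩ := Submodule.mem_sup.mp (hC.sup_eq_top ▸ Submodule.mem_top (x := m))
  rw [LinearMap.mem_ker] at hk
  simp [hk, hψ c hc]

end

theorem regular_endRing_of_quasiInjective_rickart
    {R M : Type*} [Ring R] [AddCommGroup M] [Module R M]
    (hqi : IsQuasiInjective R M) (hM : IsRickartModule R M) :
    ∀ φ : Module.End R M, ∃ ψ : Module.End R M, φ * ψ * φ = φ := by
  intro φ
  obtain ⟨C, hC⟩ := hM φ
  have hinj : Function.Injective (φ.domRestrict C) :=
    LinearMap.injective_domRestrict_iff.mpr hC.symm.disjoint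
  obtain ⟨ψ, hψ⟩ := hqi.exists_comp_eq hinj C.subtype
  exact ⟨ψ, Module.End.mul_mul_eq_self_of_isCompl_ker hC fun c hc =>
    congrArg (· ⟨c, hc⟩) hψ⟩
end

section
/- Let M be a right R-module such that S = End_R(M) has no infinite set of nonzero orthogonal idempotents. Then M is a Baer module if and only if M is a Rickart module. -/
/-- `M` is a Baer module: for every left ideal `I` of `End R M`, the common
kernel `r_M(I) = ⋂_{φ ∈ I} ker φ` is a direct summand of `M`. -/
def IsBaerModule (R M : Type*) [Ring R] [AddCommGroup M] [Module R M] : Prop :=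
  ∀ I : Ideal (Module.End R M),
    ∃ C : Submodule R M, IsCompl (⨅ φ ∈ I, LinearMap.ker φ) C

/-!
A kernel `ker φ` is the common kernel of the left ideal generated by `φ`, so Baer modules
are Rickart. Conversely, if `N` is a direct summand and `e` a projection onto `N`, then
`ker (ψ ∘ e) = (N ⊓ ker ψ) ⊕ ker e`; so in a Rickart module `N ⊓ ker ψ` is again a direct
summand, and hence so is every finite intersection of kernels. A strictly descending chain
`D₀ > D₁ > ⋯` of direct summands admits complements `K₀ ≤ K₁ ≤ ⋯`, and the projections `eₙ`
onto `Dₙ` along `Kₙ` satisfy `eₘ eₙ = e_{max m n}`, so the differences `eₙ - eₙ₊₁` are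
infinitely many nonzero orthogonal idempotents. Without those, the finite intersections of
kernels from a left ideal have a minimal element, and minimality forces it to be the full
intersection.
-/

open LinearMap Submodule

section ModularLattice

variable {α : Type*} [Lattice α] [BoundedOrder α] [IsModularLattice α]

theorem IsCompl.exists_ge_isCompl_of_le {a b k : α} (hak : IsCompl a k) (hba : b ≤ a)
    (hb : IsComplemented b) : ∃ k', k ≤ k' ∧ IsCompl b k' := by
  obtain ⟨c, hbc⟩ := hb
  have hsup : b ⊔ c ⊓ a = a := by rw [← sup_inf_assoc_of_le c hba, hbc.sup_eq_top, top_inf_eq]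
  exact ⟨c ⊓ a ⊔ k, le_sup_right,
    (hbc.disjoint.mono_right inf_le_left).isCompl_sup_right_of_isCompl_sup_left (by rwa [hsup])⟩

theorem exists_monotone_isCompl_of_antitone {D : ℕ → α} (hD : Antitone D)
    (hc : ∀ n, IsComplemented (D n)) : ∃ K : ℕ → α, Monotone K ∧ ∀ n, IsCompl (D n) (K n) := by
  have step : ∀ n k, IsCompl (D n) k → ∃ k', k ≤ k' ∧ IsCompl (D (n + 1)) k' :=
    fun n _ hk => hk.exists_ge_isCompl_of_le (hD n.le_succ) (hc (n + 1))
  choose! next hnext using step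
  obtain ⟨k₀, hk₀⟩ := hc 0
  let K : ℕ → α := fun n => Nat.rec k₀ next n
  have hK : ∀ n, IsCompl (D n) (K n) := fun n => Nat.rec hk₀ (fun n ih => (hnext n _ ih).2) n
  exact ⟨K, monotone_nat_of_le_succ fun n => (hnext n _ (hK n)).1, hK⟩

end ModularLattice

theorem orthogonalIdempotents_sub_succ_of_mul_eq_max {A : Type*} [Ring A] {e : ℕ → A}
    (he : ∀ m n, e m * e n = e (max m n)) : OrthogonalIdempotents fun n => e n - e (n + 1) where
  idem n := by
    simp only [IsIdempotentElem, sub_mul, mul_sub, he, max_self, max_eq_right n.le_succ,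
      max_eq_left n.le_succ]
    abel
  ortho m n hmn := by
    simp only [sub_mul, mul_sub, he]
    rcases lt_or_gt_of_ne hmn with h | h
    · rw [max_eq_right (by omega : m ≤ n), max_eq_right (by omega : m ≤ n + 1),
        max_eq_right (by omega : m + 1 ≤ n), max_eq_right (by omega : m + 1 ≤ n + 1)]
      abel
    · rw [max_eq_left (by omega : n ≤ m), max_eq_left (by omega : n + 1 ≤ m),
        max_eq_left (by omega : n ≤ m + 1), max_eq_left (by omega : n + 1 ≤ m + 1)]
      abel

section Module

variable {R M : Type*} [Ring R] [AddCommGroup M] [Module R M]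

theorem projection_mul_projection_of_antitone_of_monotone {D K : ℕ → Submodule R M}
    (hD : Antitone D) (hK : Monotone K) (h : ∀ n, IsCompl (D n) (K n)) (m n : ℕ) :
    (D m).projection (K m) (h m) * (D n).projection (K n) (h n) =
      (D (max m n)).projection (K (max m n)) (h (max m n)) := by
  rcases le_total m n with hmn | hnm
  · rw [max_eq_right hmn, Module.End.mul_eq_comp,
      (isIdempotentElem_projection _).comp_eq_right_iff, range_projection, range_projection]
    exact hD hmn
  · rw [max_eq_left hnm, Module.End.mul_eq_comp,
      (isIdempotentElem_projection _).comp_eq_left_iff, ker_projection, ker_projection]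
    exact hK hnm

theorem exists_orthogonalIdempotents_of_strictAnti {D : ℕ → Submodule R M} (hD : StrictAnti D)
    (hc : ∀ n, IsComplemented (D n)) :
    ∃ f : ℕ → Module.End R M, OrthogonalIdempotents f ∧ ∀ n, f n ≠ 0 := by
  obtain ⟨K, hK, h⟩ := exists_monotone_isCompl_of_antitone hD.antitone hc
  let e : ℕ → Module.End R M := fun n => (D n).projection (K n) (h n)
  have he : ∀ m n, e m * e n = e (max m n) :=
    projection_mul_projection_of_antitone_of_monotone hD.antitone hK h
  refine ⟨fun n => e n - e (n + 1), orthogonalIdempotents_sub_succ_of_mul_eq_max he,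
    fun n hn => ?_⟩
  have hDn : D n = D (n + 1) := by
    rw [← range_projection (h n), ← range_projection (h (n + 1))]
    exact congrArg range (sub_eq_zero.1 hn)
  exact (hD n.lt_succ_self).ne' hDn

theorem wellFoundedOn_isComplemented
    (h : ¬ ∃ f : ℕ → Module.End R M, OrthogonalIdempotents f ∧ ∀ n, f n ≠ 0) :
    {N : Submodule R M | IsComplemented N}.WellFoundedOn (· < ·) := by
  refine Set.wellFoundedOn_iff_no_descending_seq.2 fun f hf => h ?_
  exact exists_orthogonalIdempotents_of_strictAnti (fun _ _ hmn => f.map_rel_iff.2 hmn) hf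

theorem biInf_ker_span_singleton (φ : Module.End R M) :
    ⨅ ψ ∈ Ideal.span {φ}, ker ψ = ker φ := by
  refine le_antisymm (iInf₂_le φ (Ideal.subset_span (Set.mem_singleton φ)))
    (le_iInf₂ fun ψ hψ => ?_)
  obtain ⟨c, rfl⟩ := Ideal.mem_span_singleton'.1 hψ
  exact ker_le_ker_comp φ c

namespace IsRickartModule

theorem isComplemented_inf_ker (hR : IsRickartModule R M) {N : Submodule R M}
    (hN : IsComplemented N) (ψ : Module.End R M) : IsComplemented (N ⊓ ker ψ) := by
  obtain ⟨C, hC⟩ := hN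
  let e := N.projection C hC
  have hker : ker (ψ * e) = N ⊓ ker ψ ⊔ C := by
    refine le_antisymm (fun x hx => ?_) (sup_le (fun x hx => ?_) (fun x hx => ?_))
    · rw [← projection_add_projection_eq_self hC x]
      exact add_mem_sup ⟨projection_apply_mem hC x, hx⟩ (projection_apply_mem hC.symm x)
    · simpa [e, projection_apply_of_mem_left hC hx.1] using hx.2
    · simp [e, (projection_apply_eq_zero_iff hC).2 hx]
  obtain ⟨C', hC'⟩ := hR (ψ * e)
  exact ⟨C ⊔ C',
    (hC.disjoint.mono_left inf_le_left).isCompl_sup_right_of_isCompl_sup_left (hker ▸ hC')⟩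

theorem isComplemented_biInf_ker_finset (hR : IsRickartModule R M)
    (A : Finset (Module.End R M)) :
    IsComplemented (⨅ φ ∈ A, ker φ) := by
  classical
  induction A using Finset.induction_on with
  | empty => simpa using isComplemented_top
  | insert φ A _ ih =>
    rw [Finset.iInf_insert, inf_comm]
    exact hR.isComplemented_inf_ker ih φ

theorem isComplemented_biInf_ker (hR : IsRickartModule R M)
    (hwf : {N : Submodule R M | IsComplemented N}.WellFoundedOn (· < ·))
    (s : Set (Module.End R M)) : IsComplemented (⨅ φ ∈ s, ker φ) := by
  classical
  let T := {N | ∃ A : Finset (Module.End R M), ↑A ⊆ s ∧ ⨅ φ ∈ A, ker φ = N}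
  have hT : T ⊆ {N | IsComplemented N} := by
    rintro _ ⟨A, -, rfl⟩
    exact hR.isComplemented_biInf_ker_finset A
  obtain ⟨_, ⟨A, hAs, rfl⟩, hmin⟩ :=
    (hwf.subset hT).exists_minimal ⟨⊤, ∅, by simp, by simp⟩
  suffices ⨅ φ ∈ A, ker φ = ⨅ φ ∈ s, ker φ from this ▸ hT ⟨A, hAs, rfl⟩
  refine le_antisymm (le_iInf₂ fun φ hφ => ?_) (biInf_mono hAs)
  have hle := hmin ⟨insert φ A, by simpa [Set.insert_subset_iff] using ⟨hφ, hAs⟩, rfl⟩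
    (by rw [Finset.iInf_insert]; exact inf_le_right)
  rw [Finset.iInf_insert] at hle
  exact hle.trans inf_le_left

end IsRickartModule

end Module

theorem baer_iff_rickart_of_no_infinite_orthogonal_idempotents
    {R M : Type*} [Ring R] [AddCommGroup M] [Module R M]
    (h : ¬ ∃ f : ℕ → Module.End R M,
      (∀ n, IsIdempotentElem (f n)) ∧ (∀ n, f n ≠ 0) ∧
      (∀ m n, m ≠ n → f m * f n = 0)) :
    IsBaerModule R M ↔ IsRickartModule R M := by
  refine ⟨fun hB φ => biInf_ker_span_singleton φ ▸ hB _, fun hR I => ?_⟩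
  have hwf := wellFoundedOn_isComplemented
    fun ⟨f, hf, hne⟩ => h ⟨f, hf.idem, hne, fun _ _ hmn => hf.ortho hmn⟩
  exact hR.isComplemented_biInf_ker hwf I
end
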